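/- arXiv:1206.0489 — 3 statements merged into one kernel-verified Lean document; each statement's English description precedes it below -/
import Mathlib

section
/- If X, Y, Z are independent real-valued continuous random variables with all relevant differential entropies existing and finite, then h(X-Z) + h(Y) ≤ h(X+Y) + h(Y+Z). -/
open MeasureTheory ProbabilityTheory

/-- The differential entropy of a random variable `X` (with respect to a reference
measure `μ` on the value space, typically Lebesgue measure): if `f` is the density of
the law of `X` with respect to `μ`, then `h(X) = -E[log f(X)]`. -/
noncomputable def dent {Ω E : Type*} [MeasurableSpace Ω] [MeasurableSpace E]
    (μ : Measure E) (P : Measure Ω) (X : Ω → E) : ℝ :=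
  -∫ x, Real.log (((P.map X).rnDeriv μ x).toReal) ∂(P.map X)

/-- `X` is a continuous random variable (its law is absolutely continuous with respect
to the reference measure `μ`, i.e. it has a density `f`), and its differential entropy
exists and is finite (the log-density is integrable under the law of `X`). -/
def FiniteDent {Ω E : Type*} [MeasurableSpace Ω] [MeasurableSpace E]
    (μ : Measure E) (P : Measure Ω) (X : Ω → E) : Prop :=
  P.map X ≪ μ ∧
    Integrable (fun x => Real.log (((P.map X).rnDeriv μ x).toReal)) (P.map X)

/-!
Write `f_R` for the density of `R`. The ratio
`W = f_{X+Y}(X+Y) f_{Y+Z}(Y+Z) / (f_{X-Z}(X-Z) f_Y(Y))` has expectation at most `1`: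
integrating over `Y`, which is independent of `(X, Z)`, cancels `f_Y` and leaves at most
`c(X-Z) / f_{X-Z}(X-Z)` with `c(u) = ∫ f_{X+Y}(u+s) f_{Y+Z}(s) ds`; integrating this against the
law of `X - Z` cancels `f_{X-Z}` and leaves at most `∫ c = 1`. Since `log w ≤ w - 1`, this gives
`E[log W] ≤ 0`, and `E[log W]` is exactly `h(X-Z) + h(Y) - h(X+Y) - h(Y+Z)`.
-/

open scoped ENNReal

noncomputable def selfInfo {Ω E : Type*} [MeasurableSpace Ω] [MeasurableSpace E]
    (μ : Measure E) (P : Measure Ω) (X : Ω → E) (ω : Ω) : ℝ :=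
  -Real.log (((P.map X).rnDeriv μ (X ω)).toReal)

section SelfInfo

variable {Ω E : Type*} [MeasurableSpace Ω] [MeasurableSpace E] {μ : Measure E} {P : Measure Ω}
  {X : Ω → E}

theorem dent_eq_integral_selfInfo (hX : Measurable X) :
    dent μ P X = ∫ ω, selfInfo μ P X ω ∂P := by
  rw [dent, integral_map hX.aemeasurable
    (Measure.measurable_rnDeriv _ _).ennreal_toReal.log.aestronglyMeasurable, ← integral_neg]
  rfl

theorem FiniteDent.integrable_selfInfo (h : FiniteDent μ P X) (hX : Measurable X) :
    Integrable (selfInfo μ P X) P :=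
  ((integrable_map_measure
    (Measure.measurable_rnDeriv _ _).ennreal_toReal.log.aestronglyMeasurable
    hX.aemeasurable).mp h.2).neg

theorem ae_toReal_rnDeriv_map_pos [IsFiniteMeasure P] [SigmaFinite μ] (hac : P.map X ≪ μ)
    (hX : Measurable X) : ∀ᵐ ω ∂P, 0 < ((P.map X).rnDeriv μ (X ω)).toReal :=
  ae_of_ae_map hX.aemeasurable <| (Measure.rnDeriv_pos hac).mp <|
    Filter.Eventually.mono (hac.ae_le (Measure.rnDeriv_lt_top (P.map X) μ)) fun _ hlt hpos ↦
      ENNReal.toReal_pos hpos.ne' hlt.ne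

end SelfInfo

section Gibbs

variable {Ω : Type*} [MeasurableSpace Ω] {P : Measure Ω} [IsProbabilityMeasure P]

theorem integral_log_nonpos_of_integral_le_one {f : Ω → ℝ} (hpos : ∀ᵐ ω ∂P, 0 < f ω)
    (hf : Integrable f P) (hf1 : ∫ ω, f ω ∂P ≤ 1) : ∫ ω, Real.log (f ω) ∂P ≤ 0 := by
  by_cases hlog : Integrable (fun ω ↦ Real.log (f ω)) P
  · calc ∫ ω, Real.log (f ω) ∂P ≤ ∫ ω, (f ω - 1) ∂P :=
          integral_mono_ae hlog (hf.sub (integrable_const 1))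
            (hpos.mono fun _ ↦ Real.log_le_sub_one_of_pos)
      _ = ∫ ω, f ω ∂P - 1 := by simp [integral_sub hf (integrable_const 1)]
      _ ≤ 0 := by linarith
  · rw [integral_undef hlog]

theorem integral_log_toReal_nonpos_of_lintegral_le_one {f : Ω → ℝ≥0∞}
    (hf : AEMeasurable f P) (hpos : ∀ᵐ ω ∂P, 0 < (f ω).toReal) (hf1 : ∫⁻ ω, f ω ∂P ≤ 1) :
    ∫ ω, Real.log (f ω).toReal ∂P ≤ 0 := by
  have hfin : ∫⁻ ω, f ω ∂P ≠ ∞ := (hf1.trans_lt ENNReal.one_lt_top).ne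
  refine integral_log_nonpos_of_integral_le_one hpos
    (integrable_toReal_of_lintegral_ne_top hf hfin) ?_
  rw [integral_toReal hf (ae_lt_top' hf hfin)]
  simpa using ENNReal.toReal_mono ENNReal.one_ne_top hf1

end Gibbs

theorem lintegral_div_rnDeriv_le {α : Type*} [MeasurableSpace α] {μ ν : Measure α}
    [ν.HaveLebesgueDecomposition μ] (hνμ : ν ≪ μ) {f : α → ℝ≥0∞} (hf : AEMeasurable f μ) :
    ∫⁻ x, f x / ν.rnDeriv μ x ∂ν ≤ ∫⁻ x, f x ∂μ := by
  rw [← lintegral_rnDeriv_mul hνμ (f := fun x ↦ f x / ν.rnDeriv μ x)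
    (hf.div (Measure.measurable_rnDeriv _ _).aemeasurable)]
  exact lintegral_mono fun _ ↦ ENNReal.mul_div_le

section Correlation

variable {G : Type*} [AddCommGroup G] [MeasurableSpace G] [MeasurableAdd₂ G] {μ : Measure G}
  [SFinite μ] [μ.IsAddRightInvariant] {a b : G → ℝ≥0∞}

theorem lintegral_lintegral_add_mul (ha : Measurable a) (hb : Measurable b) :
    ∫⁻ u, ∫⁻ s, a (u + s) * b s ∂μ ∂μ = (∫⁻ u, a u ∂μ) * ∫⁻ s, b s ∂μ := by
  rw [lintegral_lintegral_swap (by fun_prop), ← lintegral_const_mul _ hb]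
  refine lintegral_congr fun s ↦ ?_
  rw [lintegral_mul_const _ (by fun_prop), lintegral_add_right_eq_self]

variable [MeasurableSub₂ G] [SigmaFinite μ]

theorem lintegral_prod_div_rnDeriv_le {ρ : Measure (G × G)} [IsFiniteMeasure ρ]
    {ν : Measure G} [SigmaFinite ν] (hρ : ρ.map (fun q ↦ q.1 - q.2) ≪ μ) (hν : ν ≪ μ)
    (ha : Measurable a) (hb : Measurable b) :
    ∫⁻ q, a (q.1.1 + q.2) * b (q.2 + q.1.2) /
        (ρ.map (fun q ↦ q.1 - q.2)).rnDeriv μ (q.1.1 - q.1.2) / ν.rnDeriv μ q.2 ∂ρ.prod ν ≤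
      (∫⁻ u, a u ∂μ) * ∫⁻ s, b s ∂μ := by
  set p := (ρ.map (fun q ↦ q.1 - q.2)).rnDeriv μ
  set c : G → ℝ≥0∞ := fun u ↦ ∫⁻ s, a (u + s) * b s ∂μ
  have hp : Measurable p := Measure.measurable_rnDeriv _ _
  have hc : Measurable c :=
    ((ha.comp measurable_add).mul (hb.comp measurable_snd)).lintegral_prod_right'
  have shift (x z : G) : ∫⁻ y, a (x + y) * b (y + z) ∂μ = c (x - z) := by
    simpa only [sub_add_add_cancel] using
      lintegral_add_right_eq_self (μ := μ) (fun s ↦ a (x - z + s) * b s) z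
  have inner (x z : G) :
      ∫⁻ y, a (x + y) * b (y + z) / p (x - z) / ν.rnDeriv μ y ∂ν ≤ c (x - z) / p (x - z) :=
    calc ∫⁻ y, a (x + y) * b (y + z) / p (x - z) / ν.rnDeriv μ y ∂ν
        ≤ ∫⁻ y, a (x + y) * b (y + z) / p (x - z) ∂μ :=
          lintegral_div_rnDeriv_le hν (by fun_prop)
      _ = c (x - z) / p (x - z) := by
          simp only [div_eq_mul_inv]
          rw [lintegral_mul_const _ (by fun_prop), shift]
  calc _ = ∫⁻ q, ∫⁻ y, a (q.1 + y) * b (y + q.2) / p (q.1 - q.2) / ν.rnDeriv μ y ∂ν ∂ρ :=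
        lintegral_prod _ (by fun_prop)
    _ ≤ ∫⁻ q, c (q.1 - q.2) / p (q.1 - q.2) ∂ρ := lintegral_mono fun q ↦ inner q.1 q.2
    _ = ∫⁻ u, c u / p u ∂ρ.map (fun q ↦ q.1 - q.2) :=
        (lintegral_map (hc.div hp) measurable_sub).symm
    _ ≤ ∫⁻ u, c u ∂μ := lintegral_div_rnDeriv_le hρ hc.aemeasurable
    _ = _ := lintegral_lintegral_add_mul ha hb

end Correlation

theorem lintegral_div_rnDeriv_map_le_of_indepFun {Ω G : Type*} [MeasurableSpace Ω]
    {P : Measure Ω} [IsFiniteMeasure P] [AddCommGroup G] [MeasurableSpace G] [MeasurableAdd₂ G]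
    [MeasurableSub₂ G] {μ : Measure G} [SigmaFinite μ] [μ.IsAddRightInvariant] {X Y Z : Ω → G}
    (hX : Measurable X) (hY : Measurable Y) (hZ : Measurable Z)
    (hind : IndepFun (fun ω ↦ (X ω, Z ω)) Y P) (hXZ : P.map (X - Z) ≪ μ) (hYμ : P.map Y ≪ μ)
    {a b : G → ℝ≥0∞} (ha : Measurable a) (hb : Measurable b) :
    ∫⁻ ω, a (X ω + Y ω) * b (Y ω + Z ω) / (P.map (X - Z)).rnDeriv μ (X ω - Z ω) /
        (P.map Y).rnDeriv μ (Y ω) ∂P ≤ (∫⁻ u, a u ∂μ) * ∫⁻ s, b s ∂μ := by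
  have hmap : P.map (X - Z) = (P.map fun ω ↦ (X ω, Z ω)).map fun q ↦ q.1 - q.2 := by
    rw [Measure.map_map measurable_sub (hX.prodMk hZ)]
    rfl
  rw [hmap] at hXZ ⊢
  have := lintegral_prod_div_rnDeriv_le hXZ hYμ ha hb
  rwa [← (indepFun_iff_map_prod_eq_prod_map_map (hX.prodMk hZ).aemeasurable
    hY.aemeasurable).mp hind, lintegral_map (by fun_prop) ((hX.prodMk hZ).prodMk hY)] at this

/-- If `X, Y, Z` are independent continuous random variables with all relevant
differential entropies existing and finite, then `h(X-Z) + h(Y) ≤ h(X+Y) + h(Y+Z)`. -/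
theorem diffEntropy_sum_diff_ineq
    {Ω : Type*} [MeasurableSpace Ω] (P : Measure Ω) [IsProbabilityMeasure P]
    (X Y Z : Ω → ℝ) (hX : Measurable X) (hY : Measurable Y) (hZ : Measurable Z)
    (hindep : iIndepFun ![X, Y, Z] P)
    (h1 : FiniteDent volume P (X - Z)) (h2 : FiniteDent volume P Y)
    (h3 : FiniteDent volume P (X + Y)) (h4 : FiniteDent volume P (Y + Z)) :
    dent volume P (X - Z) + dent volume P Y ≤
      dent volume P (X + Y) + dent volume P (Y + Z) := by
  have hXZY : IndepFun (fun ω ↦ (X ω, Z ω)) Y P := by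
    simpa using hindep.indepFun_prodMk (fun i ↦ by fin_cases i <;> assumption) 0 2 1
      (by decide) (by decide)
  set W : Ω → ℝ≥0∞ := fun ω ↦
    (P.map (X + Y)).rnDeriv volume (X ω + Y ω) * (P.map (Y + Z)).rnDeriv volume (Y ω + Z ω) /
      (P.map (X - Z)).rnDeriv volume (X ω - Z ω) / (P.map Y).rnDeriv volume (Y ω)
  have hW : ∫⁻ ω, W ω ∂P ≤ 1 :=
    (lintegral_div_rnDeriv_map_le_of_indepFun hX hY hZ hXZY h1.1 h2.1
      (Measure.measurable_rnDeriv _ _) (Measure.measurable_rnDeriv _ _)).trans <|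
      mul_le_one' (Measure.lintegral_rnDeriv_le.trans prob_le_one)
        (Measure.lintegral_rnDeriv_le.trans prob_le_one)
  have hlogW : ∀ᵐ ω ∂P, 0 < (W ω).toReal ∧ Real.log (W ω).toReal =
      (selfInfo volume P (X - Z) + selfInfo volume P Y - selfInfo volume P (X + Y) -
        selfInfo volume P (Y + Z)) ω := by
    filter_upwards [ae_toReal_rnDeriv_map_pos h1.1 (hX.sub hZ),
      ae_toReal_rnDeriv_map_pos h2.1 hY, ae_toReal_rnDeriv_map_pos h3.1 (hX.add hY),
      ae_toReal_rnDeriv_map_pos h4.1 (hY.add hZ)] with ω hU hV hS hT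
    simp only [W, selfInfo, ENNReal.toReal_div, ENNReal.toReal_mul, Pi.add_apply, Pi.sub_apply]
      at hU hV hS hT ⊢
    refine ⟨by positivity, ?_⟩
    rw [Real.log_div (by positivity) hV.ne', Real.log_div (by positivity) hU.ne',
      Real.log_mul hS.ne' hT.ne']
    ring
  have hgibbs := integral_log_toReal_nonpos_of_lintegral_le_one (by fun_prop)
    (hlogW.mono fun _ ↦ And.left) hW
  have hU := h1.integrable_selfInfo (hX.sub hZ)
  have hV := h2.integrable_selfInfo hY
  have hS := h3.integrable_selfInfo (hX.add hY)
  have hT := h4.integrable_selfInfo (hY.add hZ)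
  rw [integral_congr_ae (hlogW.mono fun _ ↦ And.right),
    integral_sub' ((hU.add hV).sub hS) hT, integral_sub' (hU.add hV) hS,
    integral_add' hU hV] at hgibbs
  rw [dent_eq_integral_selfInfo (hX.sub hZ), dent_eq_integral_selfInfo hY,
    dent_eq_integral_selfInfo (hX.add hY), dent_eq_integral_selfInfo (hY.add hZ)]
  linarith
end

section
/- Doubling-difference inequality (lower bound): If X1, X2 are independent and identically distributed real-valued continuous random variables with all relevant differential entropies existing and finite, then h(X1-X2) - h(X1) ≤ 2·(h(X1+X2) - h(X1)). -/
/-!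
Let `X, Z, Y` be independent with density `f`, and let `g = f ⋆ f` and `d = f ⋆ f(-·)` be the
densities of `X + Y` and `X - Z`. The ratio `R = g(X + Y) g(Z + Y) / (d(X - Z) f(Y))` has
expectation at most `1`: the factor `f(Y)` cancels against the density of `Y`, and after the
substitution `u = x + y`, `v = z + y` integrating out `y` produces `d(u - v)`, so that
`E[R] ≤ ∫∫ g(u) g(v) du dv = 1`. Since `X + Y`, `Z + Y`, `X - Z` and `Y` have densities `g`, `g`,
`d` and `f`, Gibbs' inequality `E[log R] ≤ E[R] - 1 ≤ 0` reads `h(X - Z) + h(Y) ≤ 2 h(X + Y)`.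
-/

open MeasureTheory ProbabilityTheory
open scoped ENNReal

theorem MeasureTheory.MeasurePreserving.isProbabilityMeasure {α β : Type*} [MeasurableSpace α]
    [MeasurableSpace β] {μ : Measure α} {ν : Measure β} [IsProbabilityMeasure μ] {T : α → β}
    (hT : MeasurePreserving T μ ν) : IsProbabilityMeasure ν :=
  hT.map_eq ▸ Measure.isProbabilityMeasure_map hT.aemeasurable

theorem MeasureTheory.MeasurePreserving.integral_comp_of_aestronglyMeasurable {α β E : Type*}
    [MeasurableSpace α] [MeasurableSpace β] [NormedAddCommGroup E] [NormedSpace ℝ E]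
    {μ : Measure α} {ν : Measure β} {T : α → β} (hT : MeasurePreserving T μ ν) {φ : β → E}
    (hφ : AEStronglyMeasurable φ ν) : ∫ x, φ (T x) ∂μ = ∫ y, φ y ∂ν := by
  rw [← hT.map_eq] at hφ ⊢
  exact (integral_map hT.aemeasurable hφ).symm

theorem ae_withDensity_ne_zero_ne_top {α : Type*} [MeasurableSpace α] {ν : Measure α}
    {g : α → ℝ≥0∞} [IsFiniteMeasure (ν.withDensity g)] (hg : Measurable g) :
    ∀ᵐ x ∂ν.withDensity g, g x ≠ 0 ∧ g x ≠ ⊤ := by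
  have hfin : ∫⁻ x, g x ∂ν ≠ ⊤ := by
    simpa [withDensity_apply] using measure_ne_top (ν.withDensity g) Set.univ
  rw [ae_withDensity_iff hg]
  filter_upwards [ae_lt_top hg hfin] with x hx h0 using ⟨h0, hx.ne⟩

theorem log_toReal_mul_div_div {a b c e : ℝ≥0∞} (ha : a ≠ 0 ∧ a ≠ ⊤) (hb : b ≠ 0 ∧ b ≠ ⊤)
    (hc : c ≠ 0 ∧ c ≠ ⊤) (he : e ≠ 0 ∧ e ≠ ⊤) :
    Real.log (a * b / c / e).toReal =
      Real.log a.toReal + Real.log b.toReal - Real.log c.toReal - Real.log e.toReal := by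
  have pos : ∀ {x : ℝ≥0∞}, x ≠ 0 ∧ x ≠ ⊤ → x.toReal ≠ 0 := fun h ↦ ENNReal.toReal_ne_zero.2 h
  rw [ENNReal.toReal_div, ENNReal.toReal_div, ENNReal.toReal_mul,
    Real.log_div (div_ne_zero (mul_ne_zero (pos ha) (pos hb)) (pos hc)) (pos he),
    Real.log_div (mul_ne_zero (pos ha) (pos hb)) (pos hc), Real.log_mul (pos ha) (pos hb)]

theorem integral_log_toReal_nonpos {α : Type*} [MeasurableSpace α] {π : Measure α}
    [IsProbabilityMeasure π] {R : α → ℝ≥0∞} (hR : AEMeasurable R π) (hR_le : ∫⁻ a, R a ∂π ≤ 1)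
    (hR_ne_zero : ∀ᵐ a ∂π, R a ≠ 0) (hlog : Integrable (fun a ↦ Real.log (R a).toReal) π) :
    ∫ a, Real.log (R a).toReal ∂π ≤ 0 := by
  have hR_ne_top : ∫⁻ a, R a ∂π ≠ ⊤ := (hR_le.trans_lt ENNReal.one_lt_top).ne
  have hR_lt_top := ae_lt_top' hR hR_ne_top
  have hR_int := integrable_toReal_of_lintegral_ne_top hR hR_ne_top
  calc ∫ a, Real.log (R a).toReal ∂π ≤ ∫ a, ((R a).toReal - 1) ∂π := by
        refine integral_mono_ae hlog (hR_int.sub (integrable_const 1)) ?_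
        filter_upwards [hR_ne_zero, hR_lt_top] with a h0 htop
        exact Real.log_le_sub_one_of_pos (ENNReal.toReal_pos h0 htop.ne)
    _ = (∫⁻ a, R a ∂π).toReal - 1 := by
        rw [integral_sub hR_int (integrable_const 1), integral_toReal hR hR_lt_top]
        simp
    _ ≤ 0 := by
        linarith [ENNReal.toReal_mono ENNReal.one_ne_top hR_le, ENNReal.toReal_one]

theorem measurePreserving_neg_withDensity {G : Type*} [InvolutiveNeg G] [MeasurableSpace G]
    [MeasurableNeg G] {ν : Measure G} [ν.IsNegInvariant] {f : G → ℝ≥0∞} (hf : Measurable f) :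
    MeasurePreserving Neg.neg (ν.withDensity f) (ν.withDensity fun x ↦ f (-x)) := by
  refine ⟨measurable_neg, Measure.ext_of_lintegral _ fun φ hφ ↦ ?_⟩
  rw [lintegral_map hφ measurable_neg,
    lintegral_withDensity_eq_lintegral_mul _ hf (g := fun x ↦ φ (-x)) (by fun_prop),
    lintegral_withDensity_eq_lintegral_mul _ (f := fun x ↦ f (-x)) (by fun_prop) hφ,
    ← lintegral_neg_eq_self]
  simp only [Pi.mul_apply, neg_neg, mul_comm]

section AddGroup

variable {G : Type*} [AddGroup G] [MeasurableSpace G] [MeasurableAdd₂ G] [MeasurableNeg G]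
  {ν : Measure G} [SFinite ν] [ν.IsAddLeftInvariant] {f f' : G → ℝ≥0∞}

theorem measurePreserving_add_withDensity (hf : Measurable f) (hf' : Measurable f') :
    MeasurePreserving (fun p : G × G ↦ p.1 + p.2) ((ν.withDensity f).prod (ν.withDensity f'))
      (ν.withDensity (f ⋆ₗ[ν] f')) :=
  ⟨measurable_add, conv_withDensity_eq_lconvolution hf hf'⟩

theorem measurePreserving_sub_withDensity [ν.IsNegInvariant] (hf : Measurable f)
    (hf' : Measurable f') :
    MeasurePreserving (fun p : G × G ↦ p.1 - p.2) ((ν.withDensity f).prod (ν.withDensity f'))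
      (ν.withDensity (f ⋆ₗ[ν] fun x ↦ f' (-x))) := by
  have := (measurePreserving_add_withDensity hf (hf'.comp measurable_neg)).comp
    ((MeasurePreserving.id _).prod (measurePreserving_neg_withDensity (ν := ν) hf'))
  simpa [Function.comp_def, sub_eq_add_neg] using this

end AddGroup

theorem lintegral_mul_sub_eq_lconvolution_neg {G : Type*} [AddCommGroup G] [MeasurableSpace G]
    [MeasurableAdd₂ G] [MeasurableNeg G] {ν : Measure G} [ν.IsAddLeftInvariant] [ν.IsNegInvariant]
    {f : G → ℝ≥0∞} (hf : Measurable f) (u v : G) :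
    ∫⁻ y, f (u - y) * f (v - y) ∂ν = (f ⋆ₗ[ν] fun x ↦ f (-x)) (u - v) := by
  rw [lconvolution_def, ← (Measure.measurePreserving_sub_left ν u).lintegral_comp (by fun_prop)]
  congr 1 with t
  rw [sub_sub_cancel]
  congr 2
  abel

section AddCommGroup

variable {G : Type*} [AddCommGroup G] [MeasurableSpace G] [MeasurableAdd₂ G] [MeasurableNeg G]
  {ν : Measure G} [SFinite ν] [ν.IsAddLeftInvariant] [ν.IsNegInvariant] {f : G → ℝ≥0∞}

theorem lintegral_lconvolution_ratio_le_one (hf : Measurable f)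
    [IsProbabilityMeasure (ν.withDensity f)] :
    ∫⁻ p : (G × G) × G, (f ⋆ₗ[ν] f) (p.1.1 + p.2) * (f ⋆ₗ[ν] f) (p.1.2 + p.2)
        / (f ⋆ₗ[ν] fun x ↦ f (-x)) (p.1.1 - p.1.2) / f p.2
      ∂((ν.withDensity f).prod (ν.withDensity f)).prod (ν.withDensity f) ≤ 1 := by
  set μ := ν.withDensity f
  set g := f ⋆ₗ[ν] f
  set d := f ⋆ₗ[ν] fun x ↦ f (-x)
  have hg : Measurable g := measurable_lconvolution ν hf hf
  have hd : Measurable d := measurable_lconvolution ν hf (by fun_prop)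
  set K : G × G → ℝ≥0∞ := fun w ↦ g w.1 * g w.2 / d (w.1 - w.2)
  have hK : Measurable K := by fun_prop
  set R : (G × G) × G → ℝ≥0∞ := fun p ↦
    g (p.1.1 + p.2) * g (p.1.2 + p.2) / d (p.1.1 - p.1.2) / f p.2
  have hR : Measurable R := by fun_prop
  have hg_one : ∫⁻ x, g x ∂ν = 1 := by
    have := (measurePreserving_add_withDensity (ν := ν) hf hf).isProbabilityMeasure
    have := measure_univ (μ := ν.withDensity g)
    rwa [withDensity_apply _ MeasurableSet.univ, Measure.restrict_univ] at this
  calc _ = ∫⁻ y, f y * ∫⁻ q, K (q.1 + y, q.2 + y) / f y ∂(μ.prod μ) ∂ν := by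
        rw [lintegral_prod_symm _ hR.aemeasurable,
          lintegral_withDensity_eq_lintegral_mul _ hf hR.lintegral_prod_left']
        simp only [Pi.mul_apply, R, K, add_sub_add_right_eq_sub]
    _ ≤ ∫⁻ y, ∫⁻ q, K (q.1 + y, q.2 + y) ∂(μ.prod μ) ∂ν := by
        refine lintegral_mono fun y ↦ ?_
        rw [← lintegral_const_mul _ (by fun_prop)]
        exact lintegral_mono fun q ↦ ENNReal.mul_div_le
    _ = ∫⁻ y, ∫⁻ w, f (w.1 - y) * f (w.2 - y) * K w ∂(ν.prod ν) ∂ν := by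
        refine lintegral_congr fun y ↦ ?_
        have hshift := (measurePreserving_add_right ν y).prod (measurePreserving_add_right ν y)
        rw [prod_withDensity hf hf,
          lintegral_withDensity_eq_lintegral_mul _ (by fun_prop) (by fun_prop),
          ← hshift.lintegral_comp (f := fun w ↦ f (w.1 - y) * f (w.2 - y) * K w) (by fun_prop)]
        simp only [Pi.mul_apply, Prod.map_fst, Prod.map_snd, add_sub_cancel_right]
        rfl
    _ = ∫⁻ w, d (w.1 - w.2) * K w ∂(ν.prod ν) := by
        rw [lintegral_lintegral_swap (by fun_prop)]
        refine lintegral_congr fun w ↦ ?_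
        rw [lintegral_mul_const _ (by fun_prop), lintegral_mul_sub_eq_lconvolution_neg hf]
    _ ≤ ∫⁻ w, g w.1 * g w.2 ∂(ν.prod ν) := lintegral_mono fun w ↦ ENNReal.mul_div_le
    _ = 1 := by rw [lintegral_prod_mul hg.aemeasurable hg.aemeasurable, hg_one, one_mul]

theorem two_mul_integral_log_lconvolution_le (hf : Measurable f)
    [IsProbabilityMeasure (ν.withDensity f)]
    (hS : Integrable (fun x ↦ Real.log ((f ⋆ₗ[ν] f) x).toReal) (ν.withDensity (f ⋆ₗ[ν] f)))
    (hD : Integrable (fun x ↦ Real.log ((f ⋆ₗ[ν] fun y ↦ f (-y)) x).toReal)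
      (ν.withDensity (f ⋆ₗ[ν] fun y ↦ f (-y))))
    (hX : Integrable (fun x ↦ Real.log (f x).toReal) (ν.withDensity f)) :
    2 * ∫ x, Real.log ((f ⋆ₗ[ν] f) x).toReal ∂(ν.withDensity (f ⋆ₗ[ν] f)) ≤
      (∫ x, Real.log ((f ⋆ₗ[ν] fun y ↦ f (-y)) x).toReal
        ∂(ν.withDensity (f ⋆ₗ[ν] fun y ↦ f (-y)))) +
      ∫ x, Real.log (f x).toReal ∂(ν.withDensity f) := by
  set μ := ν.withDensity f
  set g := f ⋆ₗ[ν] f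
  set d := f ⋆ₗ[ν] fun x ↦ f (-x)
  set π := (μ.prod μ).prod μ
  have hg : Measurable g := measurable_lconvolution ν hf hf
  have hd : Measurable d := measurable_lconvolution ν hf (by fun_prop)
  have hT₁ : MeasurePreserving (fun p : (G × G) × G ↦ p.1.1 + p.2) π (ν.withDensity g) :=
    (measurePreserving_add_withDensity hf hf).comp (measurePreserving_fst.prod (.id μ))
  have hT₂ : MeasurePreserving (fun p : (G × G) × G ↦ p.1.2 + p.2) π (ν.withDensity g) :=
    (measurePreserving_add_withDensity hf hf).comp (measurePreserving_snd.prod (.id μ))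
  have hT₃ : MeasurePreserving (fun p : (G × G) × G ↦ p.1.1 - p.1.2) π (ν.withDensity d) :=
    (measurePreserving_sub_withDensity hf hf).comp measurePreserving_fst
  have hT₄ : MeasurePreserving (fun p : (G × G) × G ↦ p.2) π μ := measurePreserving_snd
  have := hT₁.isProbabilityMeasure
  have := hT₃.isProbabilityMeasure
  set R : (G × G) × G → ℝ≥0∞ := fun p ↦
    g (p.1.1 + p.2) * g (p.1.2 + p.2) / d (p.1.1 - p.1.2) / f p.2
  have hR : ∀ᵐ p ∂π, R p ≠ 0 ∧ Real.log (R p).toReal =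
      Real.log (g (p.1.1 + p.2)).toReal + Real.log (g (p.1.2 + p.2)).toReal -
        Real.log (d (p.1.1 - p.1.2)).toReal - Real.log (f p.2).toReal := by
    filter_upwards [hT₁.quasiMeasurePreserving.ae (ae_withDensity_ne_zero_ne_top hg),
      hT₂.quasiMeasurePreserving.ae (ae_withDensity_ne_zero_ne_top hg),
      hT₃.quasiMeasurePreserving.ae (ae_withDensity_ne_zero_ne_top hd),
      hT₄.quasiMeasurePreserving.ae (ae_withDensity_ne_zero_ne_top hf)] with p h₁ h₂ h₃ h₄
    refine ⟨?_, log_toReal_mul_div_div h₁ h₂ h₃ h₄⟩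
    simp [R, h₁.1, h₂.1, h₃.2, h₄.2]
  have hI₁ : Integrable (fun p ↦ Real.log (g (p.1.1 + p.2)).toReal) π :=
    (hT₁.integrable_comp hS.aestronglyMeasurable).2 hS
  have hI₂ : Integrable (fun p ↦ Real.log (g (p.1.2 + p.2)).toReal) π :=
    (hT₂.integrable_comp hS.aestronglyMeasurable).2 hS
  have hI₃ : Integrable (fun p ↦ Real.log (d (p.1.1 - p.1.2)).toReal) π :=
    (hT₃.integrable_comp hD.aestronglyMeasurable).2 hD
  have hI₄ : Integrable (fun p ↦ Real.log (f p.2).toReal) π :=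
    (hT₄.integrable_comp hX.aestronglyMeasurable).2 hX
  have hlogR : ∫ p, Real.log (R p).toReal ∂π = 2 * ∫ x, Real.log (g x).toReal ∂(ν.withDensity g) -
      ∫ x, Real.log (d x).toReal ∂(ν.withDensity d) - ∫ x, Real.log (f x).toReal ∂μ := by
    rw [integral_congr_ae (hR.mono fun p hp ↦ hp.2), integral_sub (by fun_prop) hI₄,
      integral_sub (by fun_prop) hI₃, integral_add hI₁ hI₂,
      hT₁.integral_comp_of_aestronglyMeasurable hS.aestronglyMeasurable,
      hT₂.integral_comp_of_aestronglyMeasurable hS.aestronglyMeasurable,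
      hT₃.integral_comp_of_aestronglyMeasurable hD.aestronglyMeasurable,
      hT₄.integral_comp_of_aestronglyMeasurable hX.aestronglyMeasurable]
    ring
  have hgibbs := integral_log_toReal_nonpos (by fun_prop) (lintegral_lconvolution_ratio_le_one hf)
    (hR.mono fun p hp ↦ hp.1) (Integrable.congr (by fun_prop) (hR.mono fun p hp ↦ hp.2.symm))
  linarith

end AddCommGroup

theorem log_rnDeriv_map_ae_eq {Ω E : Type*} [MeasurableSpace Ω] [MeasurableSpace E]
    {μ : Measure E} [SigmaFinite μ] {P : Measure Ω} {X : Ω → E} {g : E → ℝ≥0∞}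
    (hg : Measurable g) (hX : P.map X = μ.withDensity g) :
    (fun x ↦ Real.log ((P.map X).rnDeriv μ x).toReal) =ᵐ[P.map X]
      fun x ↦ Real.log (g x).toReal := by
  rw [hX]
  filter_upwards [(withDensity_absolutelyContinuous μ g).ae_le (Measure.rnDeriv_withDensity μ hg)]
    with x hx
  rw [hx]

theorem dent_eq_of_map_eq_withDensity {Ω E : Type*} [MeasurableSpace Ω] [MeasurableSpace E]
    {μ : Measure E} [SigmaFinite μ] {P : Measure Ω} {X : Ω → E} {g : E → ℝ≥0∞}
    (hg : Measurable g) (hX : P.map X = μ.withDensity g) :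
    dent μ P X = -∫ x, Real.log (g x).toReal ∂(μ.withDensity g) := by
  rw [dent, integral_congr_ae (log_rnDeriv_map_ae_eq hg hX), hX]

theorem FiniteDent.integrable_log_density {Ω E : Type*} [MeasurableSpace Ω] [MeasurableSpace E]
    {μ : Measure E} [SigmaFinite μ] {P : Measure Ω} {X : Ω → E} {g : E → ℝ≥0∞}
    (h : FiniteDent μ P X) (hg : Measurable g) (hX : P.map X = μ.withDensity g) :
    Integrable (fun x ↦ Real.log (g x).toReal) (μ.withDensity g) :=
  hX ▸ h.2.congr (log_rnDeriv_map_ae_eq hg hX)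

/-- **Doubling-difference inequality (lower bound).**
If `X₁, X₂` are i.i.d. continuous random variables with all relevant differential
entropies existing and finite, then `h(X₁-X₂) - h(X₁) ≤ 2·(h(X₁+X₂) - h(X₁))`. -/
theorem doubling_difference_lower
    {Ω : Type*} [MeasurableSpace Ω] (P : Measure Ω) [IsProbabilityMeasure P]
    (X₁ X₂ : Ω → ℝ) (hX₁ : Measurable X₁) (hX₂ : Measurable X₂)
    (hindep : IndepFun X₁ X₂ P) (hid : IdentDistrib X₁ X₂ P P)
    (h1 : FiniteDent volume P (X₁ + X₂)) (h2 : FiniteDent volume P (X₁ - X₂))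
    (h3 : FiniteDent volume P X₁) :
    dent volume P (X₁ - X₂) - dent volume P X₁ ≤
      2 * (dent volume P (X₁ + X₂) - dent volume P X₁) := by
  set f := (P.map X₁).rnDeriv volume
  have hf : Measurable f := Measure.measurable_rnDeriv _ _
  have hlaw : P.map X₁ = volume.withDensity f := (Measure.withDensity_rnDeriv_eq _ _ h3.1).symm
  have := (⟨hX₁, hlaw⟩ : MeasurePreserving X₁ P _).isProbabilityMeasure
  have hjoint : MeasurePreserving (fun ω ↦ (X₁ ω, X₂ ω)) P
      ((volume.withDensity f).prod (volume.withDensity f)) := by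
    refine ⟨hX₁.prodMk hX₂, ?_⟩
    rw [(indepFun_iff_map_prod_eq_prod_map_map hX₁.aemeasurable hX₂.aemeasurable).1 hindep,
      ← hid.map_eq, hlaw]
  have hsum : P.map (X₁ + X₂) = volume.withDensity (f ⋆ₗ f) :=
    ((measurePreserving_add_withDensity hf hf).comp hjoint).map_eq
  have hdiff : P.map (X₁ - X₂) = volume.withDensity (f ⋆ₗ fun x ↦ f (-x)) :=
    ((measurePreserving_sub_withDensity hf hf).comp hjoint).map_eq
  have key := two_mul_integral_log_lconvolution_le hf (h1.integrable_log_density (by fun_prop) hsum)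
    (h2.integrable_log_density (by fun_prop) hdiff) (h3.integrable_log_density hf hlaw)
  rw [dent_eq_of_map_eq_withDensity (by fun_prop) hsum,
    dent_eq_of_map_eq_withDensity (by fun_prop) hdiff, dent_eq_of_map_eq_withDensity hf hlaw]
  linarith
end

section
/- Sum-difference inequality for differential entropy: If X and Y are independent real-valued continuous random variables with all relevant differential entropies existing and finite, then h(X+Y) ≤ 3·h(X-Y) - h(X) - h(Y). -/
/-!
Let `X, Y, Y'` be independent, `Y'` a copy of `Y`, and write `f, g, s, d` for the densities of
`X, Y, X + Y, X - Y`. Since `X - Y'` has the same law as `X - Y` and `X + Y'` the same as `X + Y`,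
the claim is `E[φ] ≤ 0` for
`φ = 2 log d(X - Y) + log d(X - Y') - log f(X) - log g(Y) - log s(X + Y')`.
With `p` the density of `Y + Y'` and `c(e) = E[d(Y - e)]`, `φ = log t₁ + log t₂ + log t₃` for
`t₁ = d(X - Y) p(Y + Y') / (s(X + Y') g(Y))`, `t₂ = d(X - Y) d(X - Y') / (c(Y + Y' - X) f(X))` and
`t₃ = c(Y + Y' - X) / p(Y + Y')`. Each `E[tᵢ] ≤ 1`: integrating out one variable cancels the density
in the denominator against the law, and the rest is translation invariance of Lebesgue measure.
Hence `E[φ] ≤ ∑ (E[tᵢ] - 1) ≤ 0` by `log t ≤ t - 1`.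
-/

open MeasureTheory ProbabilityTheory

open scoped ENNReal

theorem lintegral_div_rnDeriv_le_s8 {α : Type*} [MeasurableSpace α] {ρ κ : Measure α}
    [ρ.HaveLebesgueDecomposition κ] (hρ : ρ ≪ κ) {f : α → ℝ≥0∞} (hf : Measurable f) :
    ∫⁻ x, f x / ρ.rnDeriv κ x ∂ρ ≤ ∫⁻ x, f x ∂κ := by
  rw [← lintegral_rnDeriv_mul hρ (by fun_prop)]
  exact lintegral_mono fun x => ENNReal.mul_div_le

theorem integral_nonpos_of_le_sum_toReal_sub_one {α ι : Type*} [MeasurableSpace α] [Fintype ι]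
    {π : Measure α} [IsProbabilityMeasure π] {φ : α → ℝ} {t : ι → α → ℝ≥0∞}
    (hφ : Integrable φ π) (ht : ∀ i, AEMeasurable (t i) π) (ht_le : ∀ i, ∫⁻ ω, t i ω ∂π ≤ 1)
    (hφ_le : ∀ᵐ ω ∂π, (∀ i, t i ω ≠ ∞) → φ ω ≤ ∑ i, ((t i ω).toReal - 1)) :
    ∫ ω, φ ω ∂π ≤ 0 := by
  have ht_ne_top : ∀ i, ∫⁻ ω, t i ω ∂π ≠ ∞ := fun i =>
    ne_top_of_le_ne_top ENNReal.one_ne_top (ht_le i)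
  have ht_fin : ∀ i, ∀ᵐ ω ∂π, t i ω < ∞ := fun i => ae_lt_top' (ht i) (ht_ne_top i)
  have ht_int : ∀ i, Integrable (fun ω => (t i ω).toReal) π := fun i =>
    integrable_toReal_of_lintegral_ne_top (ht i) (ht_ne_top i)
  have ht_sub_int : ∀ i, Integrable (fun ω => (t i ω).toReal - 1) π := fun i =>
    (ht_int i).sub (integrable_const 1)
  calc ∫ ω, φ ω ∂π ≤ ∫ ω, ∑ i, ((t i ω).toReal - 1) ∂π := by
        refine integral_mono_ae hφ (integrable_finsetSum _ fun i _ => ht_sub_int i) ?_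
        filter_upwards [hφ_le, ae_all_iff.2 ht_fin] with ω hω hfin
        exact hω fun i => (hfin i).ne
    _ = ∑ i, ∫ ω, ((t i ω).toReal - 1) ∂π := integral_finsetSum _ fun i _ => ht_sub_int i
    _ ≤ 0 := by
        refine Finset.sum_nonpos fun i _ => ?_
        rw [integral_sub (ht_int i) (integrable_const 1), integral_toReal (ht i) (ht_fin i)]
        simpa using ENNReal.toReal_mono ENNReal.one_ne_top (ht_le i)

theorem MeasureTheory.MeasurePreserving.ae_toReal_rnDeriv_comp_pos {α β : Type*}
    [MeasurableSpace α] [MeasurableSpace β] {π : Measure α} {θ κ : Measure β} [SigmaFinite θ]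
    [SigmaFinite κ] {T : α → β} (hT : MeasurePreserving T π θ) (hθ : θ ≪ κ) :
    ∀ᵐ ω ∂π, 0 < (θ.rnDeriv κ (T ω)).toReal := by
  refine ae_of_ae_map (p := fun v => 0 < (θ.rnDeriv κ v).toReal) hT.measurable.aemeasurable ?_
  rw [hT.map_eq]
  filter_upwards [Measure.rnDeriv_pos hθ, hθ.ae_le (Measure.rnDeriv_lt_top θ κ)] with v h0 htop
  exact ENNReal.toReal_pos h0.ne' htop.ne

theorem MeasureTheory.MeasurePreserving.integrable_comp_and_integral_comp {α β : Type*}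
    [MeasurableSpace α] [MeasurableSpace β] {π : Measure α} {θ : Measure β} {T : α → β}
    (hT : MeasurePreserving T π θ) {L : β → ℝ} (hL : Integrable L θ) :
    Integrable (fun ω => L (T ω)) π ∧ ∫ ω, L (T ω) ∂π = ∫ v, L v ∂θ :=
  ⟨(hT.integrable_comp hL.aestronglyMeasurable).mpr hL, by
    rw [← hT.map_eq, integral_map hT.measurable.aemeasurable (hT.map_eq ▸ hL.aestronglyMeasurable)]⟩

theorem measurePreserving_sub_prod_conv_map_neg {G : Type*} [AddGroup G] [MeasurableSpace G]
    [MeasurableAdd₂ G] [MeasurableNeg G] (μ ν : Measure G) [SFinite μ] [SFinite ν] :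
    MeasurePreserving (fun q : G × G => q.1 - q.2) (μ.prod ν) (μ ∗ ν.map Neg.neg) := by
  have h := (⟨measurable_add, rfl⟩ : MeasurePreserving (fun q : G × G => q.1 + q.2)
    (μ.prod (ν.map Neg.neg)) (μ ∗ ν.map Neg.neg)).comp
    ((MeasurePreserving.id μ).prod (⟨measurable_neg, rfl⟩ : MeasurePreserving Neg.neg ν _))
  convert h using 1
  funext q
  simp [sub_eq_add_neg]

noncomputable def logDensity (θ : Measure ℝ) (x : ℝ) : ℝ := Real.log (θ.rnDeriv volume x).toReal

noncomputable def diffEntropy (θ : Measure ℝ) : ℝ := -∫ x, logDensity θ x ∂θ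

namespace SumDifference

variable {μ ν : Measure ℝ} {d : ℝ → ℝ≥0∞}

/-- If `d` is the density of `X - Y`, this is the density of `Y' - (X - Y)` for an independent
`Y' ~ ν`. -/
noncomputable def meanShift (ν : Measure ℝ) (d : ℝ → ℝ≥0∞) (e : ℝ) : ℝ≥0∞ :=
  ∫⁻ y, d (y - e) ∂ν

@[fun_prop]
theorem measurable_meanShift [SFinite ν] (hd : Measurable d) : Measurable (meanShift ν d) := by
  unfold meanShift; fun_prop

theorem lintegral_meanShift [IsProbabilityMeasure ν] (hd : Measurable d) :
    ∫⁻ e, meanShift ν d e = ∫⁻ x, d x := by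
  unfold meanShift
  rw [lintegral_lintegral_swap (by fun_prop)]
  simp [lintegral_sub_left_eq_self]

noncomputable def ratio₁ (μ ν : Measure ℝ) (d : ℝ → ℝ≥0∞) (ω : ℝ × ℝ × ℝ) : ℝ≥0∞ :=
  d (ω.1 - ω.2.1) * (∂(ν ∗ ν)/∂volume) (ω.2.1 + ω.2.2) / (∂(μ ∗ ν)/∂volume) (ω.1 + ω.2.2)
    / (∂ν/∂volume) ω.2.1

noncomputable def ratio₂ (μ ν : Measure ℝ) (d : ℝ → ℝ≥0∞) (ω : ℝ × ℝ × ℝ) : ℝ≥0∞ :=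
  d (ω.1 - ω.2.1) * d (ω.1 - ω.2.2) / meanShift ν d (ω.2.1 + ω.2.2 - ω.1) / (∂μ/∂volume) ω.1

noncomputable def ratio₃ (ν : Measure ℝ) (d : ℝ → ℝ≥0∞) (ω : ℝ × ℝ × ℝ) : ℝ≥0∞ :=
  meanShift ν d (ω.2.1 + ω.2.2 - ω.1) / (∂(ν ∗ ν)/∂volume) (ω.2.1 + ω.2.2)

noncomputable def logRatio (μ ν : Measure ℝ) (ω : ℝ × ℝ × ℝ) : ℝ :=
  2 * logDensity (μ ∗ ν.map Neg.neg) (ω.1 - ω.2.1) + logDensity (μ ∗ ν.map Neg.neg) (ω.1 - ω.2.2)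
    - logDensity μ ω.1 - logDensity ν ω.2.1 - logDensity (μ ∗ ν) (ω.1 + ω.2.2)

@[fun_prop]
theorem measurable_ratio₁ (hd : Measurable d) : Measurable (ratio₁ μ ν d) := by
  unfold ratio₁; fun_prop

@[fun_prop]
theorem measurable_ratio₂ [SFinite ν] (hd : Measurable d) : Measurable (ratio₂ μ ν d) := by
  unfold ratio₂; fun_prop

@[fun_prop]
theorem measurable_ratio₃ [SFinite ν] (hd : Measurable d) : Measurable (ratio₃ ν d) := by
  unfold ratio₃; fun_prop

theorem two_log_add_log_sub_le {a b f g s p c : ℝ} (ha : 0 < a) (hb : 0 < b) (hf : 0 < f)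
    (hg : 0 < g) (hs : 0 < s) (hp : 0 < p) (hc : 0 < c) :
    2 * Real.log a + Real.log b - Real.log f - Real.log g - Real.log s ≤
      (a * p / s / g - 1) + (a * b / c / f - 1) + (c / p - 1) := by
  have h₁ := Real.log_le_sub_one_of_pos (show 0 < a * p / s / g by positivity)
  have h₂ := Real.log_le_sub_one_of_pos (show 0 < a * b / c / f by positivity)
  have h₃ := Real.log_le_sub_one_of_pos (show 0 < c / p by positivity)
  rw [Real.log_div (by positivity) hg.ne', Real.log_div (by positivity) hs.ne',
    Real.log_mul ha.ne' hp.ne'] at h₁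
  rw [Real.log_div (by positivity) hf.ne', Real.log_div (by positivity) hc.ne',
    Real.log_mul ha.ne' hb.ne'] at h₂
  rw [Real.log_div hc.ne' hp.ne'] at h₃
  linarith

variable [IsProbabilityMeasure μ] [IsProbabilityMeasure ν]

theorem lintegral_ratio₁_le (hν : ν ≪ volume) (hd : Measurable d) :
    ∫⁻ ω, ratio₁ μ ν d ω ∂(μ.prod (ν.prod ν)) ≤ ∫⁻ x, d x := by
  set p := ∂(ν ∗ ν)/∂volume
  set s := ∂(μ ∗ ν)/∂volume
  set F : ℝ → ℝ≥0∞ := fun w => ∫⁻ u, d (w - u) * p u / s w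
  rw [lintegral_prod _ (by fun_prop)]
  calc ∫⁻ x, ∫⁻ q, ratio₁ μ ν d (x, q) ∂(ν.prod ν) ∂μ
      = ∫⁻ x, ∫⁻ z, ∫⁻ y, d (x - y) * p (y + z) / s (x + z) / (∂ν/∂volume) y ∂ν ∂ν ∂μ :=
        lintegral_congr fun x => lintegral_prod_symm _ (by fun_prop)
    _ ≤ ∫⁻ x, ∫⁻ z, ∫⁻ y, d (x - y) * p (y + z) / s (x + z) ∂volume ∂ν ∂μ :=
        lintegral_mono fun x => lintegral_mono fun z => lintegral_div_rnDeriv_le_s8 hν (by fun_prop)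
    _ = ∫⁻ x, ∫⁻ z, F (x + z) ∂ν ∂μ := by
        refine lintegral_congr fun x => lintegral_congr fun z => ?_
        show _ = ∫⁻ u, d (x + z - u) * p u / s (x + z)
        rw [← lintegral_add_right_eq_self (fun u => d (x + z - u) * p u / s (x + z)) z]
        simp only [add_sub_add_right_eq_sub]
    _ = ∫⁻ w, F w ∂(μ ∗ ν) := (Measure.lintegral_conv (by fun_prop)).symm
    _ = ∫⁻ u, ∫⁻ w, d (w - u) * p u / s w ∂(μ ∗ ν) := lintegral_lintegral_swap (by fun_prop)
    _ ≤ ∫⁻ u, ∫⁻ w, d (w - u) * p u ∂volume :=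
        lintegral_mono fun u => lintegral_div_rnDeriv_le_s8
          (Measure.conv_absolutelyContinuous hν) (by fun_prop)
    _ = ∫⁻ u, (∫⁻ x, d x) * p u := by
        refine lintegral_congr fun u => ?_
        rw [lintegral_mul_const _ (by fun_prop), lintegral_sub_right_eq_self]
    _ = (∫⁻ x, d x) * ∫⁻ u, p u := lintegral_const_mul _ (by fun_prop)
    _ ≤ (∫⁻ x, d x) * 1 := by
        gcongr
        exact Measure.lintegral_rnDeriv_le.trans_eq measure_univ
    _ = ∫⁻ x, d x := mul_one _

theorem lintegral_ratio₂_le (hμ : μ ≪ volume) (hd : Measurable d) :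
    ∫⁻ ω, ratio₂ μ ν d ω ∂(μ.prod (ν.prod ν)) ≤ ∫⁻ x, d x := by
  set c := meanShift ν d
  rw [lintegral_prod_symm _ (by fun_prop)]
  calc ∫⁻ q, ∫⁻ x, ratio₂ μ ν d (x, q) ∂μ ∂(ν.prod ν)
      ≤ ∫⁻ q : ℝ × ℝ, ∫⁻ x, d (x - q.1) * d (x - q.2) / c (q.1 + q.2 - x) ∂volume ∂(ν.prod ν) :=
        lintegral_mono fun q => lintegral_div_rnDeriv_le_s8 hμ (by fun_prop)
    _ = ∫⁻ q : ℝ × ℝ, ∫⁻ e, d (q.1 - e) * d (q.2 - e) / c e ∂volume ∂(ν.prod ν) := by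
        refine lintegral_congr fun q => ?_
        rw [← lintegral_sub_left_eq_self (fun e => d (q.1 - e) * d (q.2 - e) / c e) (q.1 + q.2)]
        refine lintegral_congr fun x => ?_
        rw [show q.1 - (q.1 + q.2 - x) = x - q.2 by ring,
          show q.2 - (q.1 + q.2 - x) = x - q.1 by ring, mul_comm (d (x - q.2))]
    _ = ∫⁻ e, c e * c e / c e := by
        rw [lintegral_lintegral_swap (by fun_prop)]
        refine lintegral_congr fun e => ?_
        simp_rw [div_eq_mul_inv]
        rw [lintegral_mul_const _ (by fun_prop),
          lintegral_prod_mul (f := fun y => d (y - e)) (g := fun z => d (z - e)) (by fun_prop)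
            (by fun_prop)]
        rfl
    _ ≤ ∫⁻ e, c e := lintegral_mono fun e => by
        rw [mul_div_assoc]
        exact ENNReal.mul_div_le
    _ = ∫⁻ x, d x := lintegral_meanShift hd

theorem lintegral_ratio₃_le (hν : ν ≪ volume) (hd : Measurable d) :
    ∫⁻ ω, ratio₃ ν d ω ∂(μ.prod (ν.prod ν)) ≤ ∫⁻ x, d x := by
  set c := meanShift ν d
  rw [lintegral_prod _ (by fun_prop)]
  calc ∫⁻ x, ∫⁻ q, c (q.1 + q.2 - x) / (∂(ν ∗ ν)/∂volume) (q.1 + q.2) ∂(ν.prod ν) ∂μ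
      = ∫⁻ x, ∫⁻ w, c (w - x) / (∂(ν ∗ ν)/∂volume) w ∂(ν ∗ ν) ∂μ := by
        refine lintegral_congr fun x => ?_
        rw [Measure.conv, lintegral_map (by fun_prop) measurable_add]
    _ ≤ ∫⁻ x, ∫⁻ w, c (w - x) ∂volume ∂μ :=
        lintegral_mono fun x => lintegral_div_rnDeriv_le_s8
          (Measure.conv_absolutelyContinuous hν) (by fun_prop)
    _ = ∫⁻ x, d x := by simp [c, lintegral_sub_right_eq_self, lintegral_meanShift hd]

section Laws

/-! `μ.prod (ν.prod ν)` is the law of `(X, Y, Y')`; its points are `ω = (x, y, z)`. -/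

variable (μ ν)

theorem measurePreserving_y :
    MeasurePreserving (fun ω : ℝ × ℝ × ℝ => ω.2.1) (μ.prod (ν.prod ν)) ν :=
  measurePreserving_fst.comp measurePreserving_snd

theorem measurePreserving_x_sub_y : MeasurePreserving (fun ω : ℝ × ℝ × ℝ => ω.1 - ω.2.1)
    (μ.prod (ν.prod ν)) (μ ∗ ν.map Neg.neg) :=
  (measurePreserving_sub_prod_conv_map_neg μ ν).comp
    ((MeasurePreserving.id μ).prod measurePreserving_fst)

theorem measurePreserving_x_sub_z : MeasurePreserving (fun ω : ℝ × ℝ × ℝ => ω.1 - ω.2.2)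
    (μ.prod (ν.prod ν)) (μ ∗ ν.map Neg.neg) :=
  (measurePreserving_sub_prod_conv_map_neg μ ν).comp
    ((MeasurePreserving.id μ).prod measurePreserving_snd)

theorem measurePreserving_x_add_z :
    MeasurePreserving (fun ω : ℝ × ℝ × ℝ => ω.1 + ω.2.2) (μ.prod (ν.prod ν)) (μ ∗ ν) :=
  (⟨measurable_add, rfl⟩ : MeasurePreserving (fun q : ℝ × ℝ => q.1 + q.2) _ (μ ∗ ν)).comp
    ((MeasurePreserving.id μ).prod measurePreserving_snd)

theorem measurePreserving_y_add_z :
    MeasurePreserving (fun ω : ℝ × ℝ × ℝ => ω.2.1 + ω.2.2) (μ.prod (ν.prod ν)) (ν ∗ ν) :=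
  (⟨measurable_add, rfl⟩ : MeasurePreserving (fun q : ℝ × ℝ => q.1 + q.2) _ (ν ∗ ν)).comp
    measurePreserving_snd

end Laws

theorem integrable_logRatio_and_integral (hμ : Integrable (logDensity μ) μ)
    (hν : Integrable (logDensity ν) ν) (hS : Integrable (logDensity (μ ∗ ν)) (μ ∗ ν))
    (hD : Integrable (logDensity (μ ∗ ν.map Neg.neg)) (μ ∗ ν.map Neg.neg)) :
    Integrable (logRatio μ ν) (μ.prod (ν.prod ν)) ∧
      ∫ ω, logRatio μ ν ω ∂(μ.prod (ν.prod ν)) = diffEntropy (μ ∗ ν) + diffEntropy μ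
        + diffEntropy ν - 3 * diffEntropy (μ ∗ ν.map Neg.neg) := by
  obtain ⟨i₁, e₁⟩ := (measurePreserving_x_sub_y μ ν).integrable_comp_and_integral_comp hD
  obtain ⟨i₂, e₂⟩ := (measurePreserving_x_sub_z μ ν).integrable_comp_and_integral_comp hD
  obtain ⟨i₃, e₃⟩ :=
    (measurePreserving_fst (μ := μ) (ν := ν.prod ν)).integrable_comp_and_integral_comp hμ
  obtain ⟨i₄, e₄⟩ := (measurePreserving_y μ ν).integrable_comp_and_integral_comp hν
  obtain ⟨i₅, e₅⟩ := (measurePreserving_x_add_z μ ν).integrable_comp_and_integral_comp hS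
  refine ⟨((((i₁.const_mul 2).add i₂).sub i₃).sub i₄).sub i₅, ?_⟩
  unfold logRatio diffEntropy
  rw [integral_sub (by fun_prop) i₅, integral_sub (by fun_prop) i₄, integral_sub (by fun_prop) i₃,
    integral_add (by fun_prop) i₂, integral_const_mul, e₁, e₂, e₃, e₄, e₅]
  ring

/-- Positivity and finiteness of `meanShift` along `y + z - x` are not derived from its being a
density but read off from the finiteness of `ratio₂` and `ratio₃`. -/
theorem ae_logRatio_le (hμ : μ ≪ volume) (hν : ν ≪ volume) :
    ∀ᵐ ω ∂(μ.prod (ν.prod ν)),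
      ratio₂ μ ν (∂(μ ∗ ν.map Neg.neg)/∂volume) ω ≠ ∞ →
      ratio₃ ν (∂(μ ∗ ν.map Neg.neg)/∂volume) ω ≠ ∞ →
      logRatio μ ν ω ≤ ((ratio₁ μ ν (∂(μ ∗ ν.map Neg.neg)/∂volume) ω).toReal - 1)
        + ((ratio₂ μ ν (∂(μ ∗ ν.map Neg.neg)/∂volume) ω).toReal - 1)
        + ((ratio₃ ν (∂(μ ∗ ν.map Neg.neg)/∂volume) ω).toReal - 1) := by
  have hD : μ ∗ ν.map Neg.neg ≪ volume := Measure.conv_absolutelyContinuous <| by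
    simpa [Measure.map_neg_eq_self] using hν.map measurable_neg
  have hS := Measure.conv_absolutelyContinuous (μ := μ) hν
  have hP := Measure.conv_absolutelyContinuous (μ := ν) hν
  filter_upwards [(measurePreserving_x_sub_y μ ν).ae_toReal_rnDeriv_comp_pos hD,
    (measurePreserving_x_sub_z μ ν).ae_toReal_rnDeriv_comp_pos hD,
    measurePreserving_fst.ae_toReal_rnDeriv_comp_pos hμ,
    (measurePreserving_y μ ν).ae_toReal_rnDeriv_comp_pos hν,
    (measurePreserving_x_add_z μ ν).ae_toReal_rnDeriv_comp_pos hS,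
    (measurePreserving_y_add_z μ ν).ae_toReal_rnDeriv_comp_pos hP]
    with ω ha hb hf hg hs hp h₂ h₃
  have hc : 0 < (meanShift ν (∂(μ ∗ ν.map Neg.neg)/∂volume) (ω.2.1 + ω.2.2 - ω.1)).toReal := by
    obtain ⟨ha₀, -⟩ := ENNReal.toReal_ne_zero.1 ha.ne'
    obtain ⟨hb₀, -⟩ := ENNReal.toReal_ne_zero.1 hb.ne'
    obtain ⟨-, hf_top⟩ := ENNReal.toReal_ne_zero.1 hf.ne'
    obtain ⟨-, hp_top⟩ := ENNReal.toReal_ne_zero.1 hp.ne'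
    refine ENNReal.toReal_pos (fun h0 => h₂ ?_) (fun htop => h₃ ?_)
    · rw [ratio₂, h0, ENNReal.div_zero (mul_ne_zero ha₀ hb₀), ENNReal.top_div_of_ne_top hf_top]
    · rw [ratio₃, htop, ENNReal.top_div_of_ne_top hp_top]
  simp only [logRatio, logDensity, ratio₁, ratio₂, ratio₃, ENNReal.toReal_div, ENNReal.toReal_mul]
  exact two_log_add_log_sub_le ha hb hf hg hs hp hc

theorem diffEntropy_conv_le (hμ : μ ≪ volume) (hν : ν ≪ volume)
    (hμi : Integrable (logDensity μ) μ) (hνi : Integrable (logDensity ν) ν)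
    (hSi : Integrable (logDensity (μ ∗ ν)) (μ ∗ ν))
    (hDi : Integrable (logDensity (μ ∗ ν.map Neg.neg)) (μ ∗ ν.map Neg.neg)) :
    diffEntropy (μ ∗ ν) ≤ 3 * diffEntropy (μ ∗ ν.map Neg.neg) - diffEntropy μ - diffEntropy ν := by
  have : IsProbabilityMeasure (ν.map Neg.neg) := Measure.isProbabilityMeasure_map (by fun_prop)
  set d := ∂(μ ∗ ν.map Neg.neg)/∂volume
  have hd : Measurable d := by fun_prop
  have hd_le : ∫⁻ x, d x ≤ 1 := Measure.lintegral_rnDeriv_le.trans_eq measure_univ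
  obtain ⟨hφ, hφ_eq⟩ := integrable_logRatio_and_integral hμi hνi hSi hDi
  have hφ_nonpos := integral_nonpos_of_le_sum_toReal_sub_one
    (t := ![ratio₁ μ ν d, ratio₂ μ ν d, ratio₃ ν d]) hφ
    (fun i => by
      fin_cases i <;> simp only [Fin.zero_eta, Fin.mk_one, Fin.reduceFinMk, Fin.isValue,
        Matrix.cons_val_zero, Matrix.cons_val_one, Matrix.cons_val] <;> fun_prop)
    (fun i => by
      fin_cases i
      exacts [(lintegral_ratio₁_le hν hd).trans hd_le, (lintegral_ratio₂_le hμ hd).trans hd_le,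
        (lintegral_ratio₃_le hν hd).trans hd_le])
    (by
      filter_upwards [ae_logRatio_le hμ hν] with ω h ht
      simpa only [Fin.sum_univ_three, Matrix.cons_val_zero, Matrix.cons_val_one,
        Matrix.cons_val_two, Matrix.head_cons, Matrix.tail_cons] using h (ht 1) (ht 2))
  linarith

end SumDifference

/-- **Sum-difference inequality for differential entropy.**
If `X, Y` are independent continuous random variables with all relevant differential
entropies existing and finite, then `h(X+Y) ≤ 3·h(X-Y) - h(X) - h(Y)`. -/
theorem sum_difference_diffEntropy
    {Ω : Type*} [MeasurableSpace Ω] (P : Measure Ω) [IsProbabilityMeasure P]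
    (X Y : Ω → ℝ) (hX : Measurable X) (hY : Measurable Y)
    (hindep : IndepFun X Y P)
    (h1 : FiniteDent volume P (X + Y)) (h2 : FiniteDent volume P (X - Y))
    (h3 : FiniteDent volume P X) (h4 : FiniteDent volume P Y) :
    dent volume P (X + Y) ≤
      3 * dent volume P (X - Y) - dent volume P X - dent volume P Y := by
  have hsum : P.map (X + Y) = P.map X ∗ P.map Y := hindep.map_add_eq_map_conv_map hX hY
  have hdiff : P.map (X - Y) = P.map X ∗ (P.map Y).map Neg.neg := by
    rw [← (measurePreserving_sub_prod_conv_map_neg _ _).map_eq,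
      ← (indepFun_iff_map_prod_eq_prod_map_map hX.aemeasurable hY.aemeasurable).1 hindep,
      Measure.map_map measurable_sub (hX.prodMk hY)]
    rfl
  have := Measure.isProbabilityMeasure_map (μ := P) hX.aemeasurable
  have := Measure.isProbabilityMeasure_map (μ := P) hY.aemeasurable
  have key := SumDifference.diffEntropy_conv_le h3.1 h4.1 h3.2 h4.2 (hsum ▸ h1.2) (hdiff ▸ h2.2)
  rwa [← hsum, ← hdiff] at key
end
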